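/- Let Π be a coupling of two probability measures μ, ν on X^C (X ⊆ ℝ, C finite with |C| = L), with means m ≤ m' as above, and suppose ∫ (L⁻¹ ∑_x |η_x − ζ_x|) dΠ = m' − m. Then Π-almost surely η_x ≤ ζ_x for all x ∈ C (the coupling is monotone). -/
import Mathlib


open MeasureTheory

theorem stmt10 {C : Type*} [Fintype C] [Nonempty C] (L : ℕ) (hL : Fintype.card C = L)
    (μ ν : Measure (C → ℝ)) [IsProbabilityMeasure μ] [IsProbabilityMeasure ν]
    (m m' : ℝ) (hm : m ≤ m')
    (hμ : ∫ η, (L : ℝ)⁻¹ * ∑ x : C, η x ∂μ = m)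
    (hν : ∫ η, (L : ℝ)⁻¹ * ∑ x : C, η x ∂ν = m')
    (hμint : Integrable (fun η : C → ℝ => (L : ℝ)⁻¹ * ∑ x : C, η x) μ)
    (hνint : Integrable (fun η : C → ℝ => (L : ℝ)⁻¹ * ∑ x : C, η x) ν)
    (P : Measure ((C → ℝ) × (C → ℝ))) [IsProbabilityMeasure P]
    (hfst : P.map Prod.fst = μ) (hsnd : P.map Prod.snd = ν)
    (hint : Integrable (fun p : (C → ℝ) × (C → ℝ) =>
      (L : ℝ)⁻¹ * ∑ x : C, |p.1 x - p.2 x|) P)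
    (hsat : ∫ p : (C → ℝ) × (C → ℝ), (L : ℝ)⁻¹ * ∑ x : C, |p.1 x - p.2 x| ∂P = m' - m) :
    ∀ᵐ p : (C → ℝ) × (C → ℝ) ∂P, ∀ x : C, p.1 x ≤ p.2 x := by
  have hL0 : 0 < L := hL ▸ Fintype.card_pos
  have hLinv : (0 : ℝ) < (L : ℝ)⁻¹ := by positivity
  set f : (C → ℝ) → ℝ := fun η => (L : ℝ)⁻¹ * ∑ x : C, η x with hf
  have hfm : Measurable f := by
    apply Measurable.const_mul
    exact Finset.measurable_sum _ (fun x _ => measurable_pi_apply x)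
  -- integrability of f ∘ fst and f ∘ snd
  have h1 : Integrable (fun p : (C → ℝ) × (C → ℝ) => f p.1) P := by
    have := hfst ▸ hμint
    exact (integrable_map_measure hfm.aestronglyMeasurable
      measurable_fst.aemeasurable).mp this
  have h2 : Integrable (fun p : (C → ℝ) × (C → ℝ) => f p.2) P := by
    have := hsnd ▸ hνint
    exact (integrable_map_measure hfm.aestronglyMeasurable
      measurable_snd.aemeasurable).mp this
  have i1 : ∫ p : (C → ℝ) × (C → ℝ), f p.1 ∂P = m := by
    rw [← hμ, ← hfst, integral_map measurable_fst.aemeasurable hfm.aestronglyMeasurable]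
  have i2 : ∫ p : (C → ℝ) × (C → ℝ), f p.2 ∂P = m' := by
    rw [← hν, ← hsnd, integral_map measurable_snd.aemeasurable hfm.aestronglyMeasurable]
  set g : (C → ℝ) × (C → ℝ) → ℝ :=
    fun p => ((L : ℝ)⁻¹ * ∑ x : C, |p.1 x - p.2 x|) - (f p.2 - f p.1) with hg
  have hgint : Integrable g P := hint.sub (h2.sub h1)
  have hg0 : 0 ≤ g := by
    intro p
    simp only [hg, hf, Pi.zero_apply, sub_nonneg]
    rw [← mul_sub, ← Finset.sum_sub_distrib]
    refine mul_le_mul_of_nonneg_left (Finset.sum_le_sum fun x _ => ?_) hLinv.le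
    have := abs_sub_comm (p.1 x) (p.2 x) ▸ le_abs_self (p.2 x - p.1 x)
    linarith
  have hgI : ∫ p, g p ∂P = 0 := by
    have e1 : ∫ p, g p ∂P = (∫ p : (C → ℝ) × (C → ℝ), (L : ℝ)⁻¹ * ∑ x : C, |p.1 x - p.2 x| ∂P)
        - ∫ p : (C → ℝ) × (C → ℝ), (f p.2 - f p.1) ∂P := integral_sub hint (h2.sub h1)
    rw [e1, integral_sub h2 h1, i1, i2, hsat, sub_self]
  have hae : g =ᵐ[P] 0 := by
    have := (integral_eq_zero_iff_of_nonneg hg0 hgint).mp hgI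
    exact this
  filter_upwards [hae] with p hp x
  have hsum : ∑ y : C, (|p.1 y - p.2 y| - (p.2 y - p.1 y)) = 0 := by
    have hp' : (L : ℝ)⁻¹ * ∑ y : C, (|p.1 y - p.2 y| - (p.2 y - p.1 y)) = 0 := by
      have hp0 : g p = 0 := hp
      simp only [hg, hf] at hp0
      rw [Finset.sum_sub_distrib, Finset.sum_sub_distrib, mul_sub, mul_sub]
      linarith
    exact (mul_eq_zero.mp hp').resolve_left (ne_of_gt hLinv)
  have hterm : ∀ y ∈ Finset.univ, (0:ℝ) ≤ |p.1 y - p.2 y| - (p.2 y - p.1 y) := by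
    intro y _
    have := abs_sub_comm (p.1 y) (p.2 y) ▸ le_abs_self (p.2 y - p.1 y)
    linarith
  have := (Finset.sum_eq_zero_iff_of_nonneg hterm).mp hsum x (Finset.mem_univ x)
  have habs : |p.1 x - p.2 x| = p.2 x - p.1 x := by linarith
  have := abs_nonneg (p.1 x - p.2 x)
  linarith
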